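/- For the trigonal bipyramid vertices x₁=p₁,…,x₅=p₅ (which satisfy Σxᵢ = 0 and span ℝ³), the vector t = (1/√6)·(3, 3, −2, −2, −2) ∈ ℝ⁵ satisfies Xᵀt = 0, t₁+⋯+t₅ = 0, and tᵀt = 5, and the corresponding matrix M = Σᵢ tᵢBᵢ equals (1/√6)·diag(6h²−3, 6h²−3, −6). Consequently −M is positive definite exactly when h² < 1/2. -/

import Mathlib

/-! Because `∑ tᵢ = 0`, the averaging term `V` cancels from `M = ∑ tᵢ Bᵢ`, leaving
`M = tr(W)·I₃ − W` for the weighted Gram matrix `W = ∑ tᵢ xᵢxᵢᵀ = (1/√6)·diag(−3, −3, 6h²)`.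
So `−M` is a positive multiple of `diag(3 − 6h², 3 − 6h², 6)`. -/

open Matrix

/-- The five vertices of the trigonal bipyramid `BP`, as rows of the `5 × 3` matrix `X`. -/
noncomputable def bpv (h : ℝ) : Fin 5 → Fin 3 → ℝ :=
  ![![0, 0, h], ![0, 0, -h], ![1, 0, 0], ![-(1/2), Real.sqrt 3 / 2, 0],
    ![-(1/2), -(Real.sqrt 3 / 2), 0]]

/-- `Bᵢ = tr(Vᵢ − V)·I₃ − (Vᵢ − V)` where `Vᵢ = xᵢxᵢᵀ` and `V = (Σⱼ xⱼxⱼᵀ)/5`. -/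
noncomputable def Bmat (x : Fin 5 → Fin 3 → ℝ) (i : Fin 5) : Matrix (Fin 3) (Fin 3) ℝ :=
  (vecMulVec (x i) (x i) - (5 : ℝ)⁻¹ • ∑ j, vecMulVec (x j) (x j)).trace •
      (1 : Matrix (Fin 3) (Fin 3) ℝ)
    - (vecMulVec (x i) (x i) - (5 : ℝ)⁻¹ • ∑ j, vecMulVec (x j) (x j))

/-- `t = (1/√6)·(3, 3, −2, −2, −2)`. -/
noncomputable def tvec : Fin 5 → ℝ := (Real.sqrt 6)⁻¹ • ![3, 3, -2, -2, -2]

theorem sum_smul_Bmat_of_sum_eq_zero (x : Fin 5 → Fin 3 → ℝ) {t : Fin 5 → ℝ}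
    (ht : ∑ i, t i = 0) :
    ∑ i, t i • Bmat x i
      = (∑ i, t i • vecMulVec (x i) (x i)).trace • 1 - ∑ i, t i • vecMulVec (x i) (x i) := by
  simp only [Bmat, trace_sub, sub_smul, smul_sub, Finset.sum_sub_distrib, smul_smul,
    ← Finset.sum_smul, trace_sum, trace_smul, smul_eq_mul, ← Finset.sum_mul, ht, zero_mul,
    zero_smul, sub_zero]

theorem trace_smul_one_sub_diagonal {n R : Type*} [Fintype n] [DecidableEq n] [Ring R]
    (d : n → R) :
    (diagonal d).trace • (1 : Matrix n n R) - diagonal d = diagonal fun i => ∑ j, d j - d i := by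
  rw [trace_diagonal, ← diagonal_one, ← diagonal_smul, diagonal_sub]
  simp

theorem posDef_neg_smul_diagonal_iff {n : Type*} [Fintype n] [DecidableEq n] {c : ℝ}
    (hc : 0 < c) (d : n → ℝ) :
    (-(c • diagonal d)).PosDef ↔ ∀ i, d i < 0 := by
  rw [← diagonal_smul, diagonal_neg, posDef_diagonal_iff]
  refine forall_congr' fun i => ?_
  rw [Pi.smul_apply, smul_eq_mul, ← mul_neg, mul_pos_iff_of_pos_left hc, neg_pos]

theorem sum_bpv (h : ℝ) : ∑ i, bpv h i = 0 := by
  ext j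
  fin_cases j <;> simp [bpv, Fin.sum_univ_five]
  norm_num

theorem span_range_bpv {h : ℝ} (h0 : h ≠ 0) : Submodule.span ℝ (Set.range (bpv h)) = ⊤ := by
  refine eq_top_iff.2 fun v _ => ?_
  have hv : v = (v 2 / h) • bpv h 0 + v 0 • bpv h 2
      + (v 1 / Real.sqrt 3) • bpv h 3 - (v 1 / Real.sqrt 3) • bpv h 4 := by
    have : Real.sqrt 3 ≠ 0 := by positivity
    ext j
    fin_cases j <;> simp [bpv] <;> field_simp
    ring
  rw [hv]
  refine sub_mem (add_mem (add_mem ?_ ?_) ?_) ?_ <;>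
    exact Submodule.smul_mem _ _ (Submodule.subset_span ⟨_, rfl⟩)

theorem sum_tvec_mul_bpv (h : ℝ) (j : Fin 3) : ∑ i, tvec i * bpv h i j = 0 := by
  fin_cases j <;> simp [bpv, tvec, Fin.sum_univ_five]
  ring

theorem sum_tvec : ∑ i, tvec i = 0 := by
  simp [tvec, Fin.sum_univ_five]; ring

theorem sum_tvec_sq : ∑ i, tvec i ^ 2 = 5 := by
  have : Real.sqrt 6 ^ 2 = 6 := Real.sq_sqrt (by norm_num)
  simp [tvec, Fin.sum_univ_five, mul_pow, inv_pow, this]; norm_num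

theorem sum_tvec_smul_vecMulVec_bpv (h : ℝ) :
    ∑ i, tvec i • vecMulVec (bpv h i) (bpv h i)
      = (Real.sqrt 6)⁻¹ • diagonal ![-3, -3, 6 * h ^ 2] := by
  ext i j
  fin_cases i <;> fin_cases j <;>
    simp [bpv, tvec, vecMulVec, Fin.sum_univ_five, vecHead, vecTail, div_mul_div_comm] <;> ring

theorem sum_tvec_smul_Bmat_bpv (h : ℝ) :
    ∑ i, tvec i • Bmat (bpv h) i
      = (Real.sqrt 6)⁻¹ • diagonal ![6 * h ^ 2 - 3, 6 * h ^ 2 - 3, -6] := by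
  rw [sum_smul_Bmat_of_sum_eq_zero _ sum_tvec, sum_tvec_smul_vecMulVec_bpv, trace_smul,
    smul_assoc, ← smul_sub, trace_smul_one_sub_diagonal]
  congr 2
  ext i
  fin_cases i <;> simp [Fin.sum_univ_three] <;> ring

/-- For the trigonal bipyramid vertices (which sum to zero and span `ℝ³`), the vector
`t = (1/√6)(3,3,−2,−2,−2)` satisfies `Xᵀt = 0`, `Σtᵢ = 0`, `tᵀt = 5`, and
`M = Σᵢ tᵢBᵢ = (1/√6)·diag(6h²−3, 6h²−3, −6)`; consequently `−M` is positive definite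
exactly when `h² < 1/2`. -/
theorem bipyramid_t_and_M (h : ℝ) (h0 : 0 < h) :
    (∑ i, bpv h i = 0) ∧
    Submodule.span ℝ (Set.range (bpv h)) = ⊤ ∧
    (∀ j : Fin 3, ∑ i, tvec i * bpv h i j = 0) ∧
    (∑ i, tvec i = 0) ∧
    (∑ i, tvec i ^ 2 = 5) ∧
    (∑ i, tvec i • Bmat (bpv h) i
      = (Real.sqrt 6)⁻¹ • Matrix.diagonal ![6 * h ^ 2 - 3, 6 * h ^ 2 - 3, -6]) ∧
    ((-(∑ i, tvec i • Bmat (bpv h) i)).PosDef ↔ h ^ 2 < 1 / 2) := by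
  refine ⟨sum_bpv h, span_range_bpv h0.ne', sum_tvec_mul_bpv h, sum_tvec, sum_tvec_sq,
    sum_tvec_smul_Bmat_bpv h, ?_⟩
  rw [sum_tvec_smul_Bmat_bpv, posDef_neg_smul_diagonal_iff (by positivity),
    Fin.forall_fin_succ, Fin.forall_fin_succ, Fin.forall_fin_one]
  simp only [cons_val_zero, cons_val_succ]
  constructor
  · rintro ⟨h2, -⟩
    linarith
  · intro h2
    refine ⟨?_, ?_, ?_⟩ <;> linarith
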